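/- arXiv:1610.09289 — 2 statements merged into one kernel-verified Lean document; each statement's English description precedes it below -/
import Mathlib

section
/- Let X and Y be square-integrable real-valued random variables and Z, U arbitrary random variables on the same probability space. Then √( E[var(X|Z,U)]·E[var(Y|Z,U)] ) − E[cov(X,Y|Z,U)] ≤ √( E[var(X|Z)]·E[var(Y|Z)] ) − E[cov(X,Y|Z)]. In particular, taking Z constant: √( E[var(X|U)]·E[var(Y|U)] ) − E[cov(X,Y|U)] ≤ √( var(X)·var(Y) ) − cov(X,Y). -/
/-! For `m₁ ≤ m₂`, `X - E[X|m₂]` is orthogonal in `L²` to every `m₂`-measurable function, which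
gives the law of total covariance
`E[cov(X,Y|m₁)] = E[cov(X,Y|m₂)] + E[(E[X|m₂] - E[X|m₁]) (E[Y|m₂] - E[Y|m₁])]`.
The last term is at most `√(c d)` by Cauchy–Schwarz, where `c` and `d` are the corresponding
terms for `(X, X)` and `(Y, Y)`, and `√(a b) + √(c d) ≤ √((a + c) (b + d))`; hence the gap
`√(E[var X] E[var Y]) - E[cov(X,Y)]` can only shrink as the σ-algebra grows. Conditioning on
nothing is the case `m₁ = ⊥`. -/

open MeasureTheory ProbabilityTheory

noncomputable section

namespace GCIM

variable {Ω : Type*}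

/-- `E[cov(X, Y | m)]`: the expectation of the conditional covariance of `X` and `Y`
given the sub-σ-algebra `m`. -/
def condCovM {m0 : MeasurableSpace Ω} (μ : Measure Ω) (m : MeasurableSpace Ω) (X Y : Ω → ℝ) : ℝ :=
  ∫ ω, (X ω - (μ[X|m]) ω) * (Y ω - (μ[Y|m]) ω) ∂μ

/-- `E[var(X | m)]`. -/
def condVarM {m0 : MeasurableSpace Ω} (μ : Measure Ω) (m : MeasurableSpace Ω) (X : Ω → ℝ) : ℝ :=
  condCovM μ m X X

def covGap {m0 : MeasurableSpace Ω} (μ : Measure Ω) (m : MeasurableSpace Ω) (X Y : Ω → ℝ) : ℝ :=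
  √(condVarM μ m X * condVarM μ m Y) - condCovM μ m X Y

lemma sqrt_mul_sub_le_sqrt_add_mul_add_sub {a b c d e f : ℝ} (ha : 0 ≤ a) (hb : 0 ≤ b)
    (hc : 0 ≤ c) (hd : 0 ≤ d) (he : e ≤ √(c * d)) :
    √(a * b) - f ≤ √((a + c) * (b + d)) - (f + e) := by
  have hsq : (√a * √b + √c * √d) ^ 2 ≤ (a + c) * (b + d) := by
    nlinarith [Real.sq_sqrt ha, Real.sq_sqrt hb, Real.sq_sqrt hc, Real.sq_sqrt hd,
      sq_nonneg (√a * √d - √c * √b)]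
  have hCS := Real.le_sqrt_of_sq_le hsq
  rw [Real.sqrt_mul ha, Real.sqrt_mul hc] at *
  linarith

section

variable {m0 : MeasurableSpace Ω} {μ : Measure Ω}

lemma _root_.MeasureTheory.MemLp.integrable_fun_mul {f g : Ω → ℝ} (hf : MemLp f 2 μ)
    (hg : MemLp g 2 μ) : Integrable (fun ω => f ω * g ω) μ :=
  hf.integrable_mul hg

lemma integral_mul_eq_inner_toLp {f g : Ω → ℝ} (hf : MemLp f 2 μ) (hg : MemLp g 2 μ) :
    ∫ ω, f ω * g ω ∂μ = inner ℝ (hf.toLp f) (hg.toLp g) := by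
  rw [L2.inner_def]
  refine integral_congr_ae ?_
  filter_upwards [hf.coeFn_toLp, hg.coeFn_toLp] with ω hfω hgω
  simp [hfω, hgω, mul_comm]

lemma integral_mul_le_sqrt_mul {f g : Ω → ℝ} (hf : MemLp f 2 μ) (hg : MemLp g 2 μ) :
    ∫ ω, f ω * g ω ∂μ ≤ √((∫ ω, f ω * f ω ∂μ) * ∫ ω, g ω * g ω ∂μ) := by
  rw [integral_mul_eq_inner_toLp hf hg, integral_mul_eq_inner_toLp hf hf,
    integral_mul_eq_inner_toLp hg hg, real_inner_self_eq_norm_mul_norm,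
    real_inner_self_eq_norm_mul_norm, mul_mul_mul_comm, Real.sqrt_mul_self (by positivity)]
  exact real_inner_le_norm _ _

lemma integral_add_mul_add_of_orthogonal {a a' b b' : Ω → ℝ} (ha : MemLp a 2 μ)
    (ha' : MemLp a' 2 μ) (hb : MemLp b 2 μ) (hb' : MemLp b' 2 μ)
    (hab' : ∫ ω, a ω * b' ω ∂μ = 0) (hba' : ∫ ω, b ω * a' ω ∂μ = 0) :
    ∫ ω, (a ω + a' ω) * (b ω + b' ω) ∂μ = ∫ ω, a ω * b ω ∂μ + ∫ ω, a' ω * b' ω ∂μ := by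
  have hexpand : ∀ ω, (a ω + a' ω) * (b ω + b' ω) =
      (a ω * b ω + a' ω * b' ω) + (a ω * b' ω + b ω * a' ω) := fun ω => by ring
  simp_rw [hexpand]
  have hab_int := ha.integrable_fun_mul hb
  have ha'b'_int := ha'.integrable_fun_mul hb'
  have hab'_int := ha.integrable_fun_mul hb'
  have hba'_int := hb.integrable_fun_mul ha'
  rw [integral_add (hab_int.fun_add ha'b'_int) (hab'_int.fun_add hba'_int),
    integral_add hab_int ha'b'_int, integral_add hab'_int hba'_int, hab', hba', add_zero,
    add_zero]

lemma integral_mul_condExp_of_stronglyMeasurable {m : MeasurableSpace Ω} (hm : m ≤ m0)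
    [IsFiniteMeasure μ] {X g : Ω → ℝ} (hX : MemLp X 2 μ) (hg : MemLp g 2 μ)
    (hgm : StronglyMeasurable[m] g) :
    ∫ ω, g ω * (μ[X|m]) ω ∂μ = ∫ ω, g ω * X ω ∂μ := by
  calc ∫ ω, g ω * (μ[X|m]) ω ∂μ = ∫ ω, (μ[g * X|m]) ω ∂μ :=
        integral_congr_ae (condExp_mul_of_stronglyMeasurable_left hgm
          (hg.integrable_mul hX) (hX.integrable one_le_two)).symm
    _ = ∫ ω, g ω * X ω ∂μ := integral_condExp hm

lemma integral_sub_condExp_mul_eq_zero {m : MeasurableSpace Ω} (hm : m ≤ m0)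
    [IsFiniteMeasure μ] {X g : Ω → ℝ} (hX : MemLp X 2 μ) (hg : MemLp g 2 μ)
    (hgm : StronglyMeasurable[m] g) :
    ∫ ω, (X ω - (μ[X|m]) ω) * g ω ∂μ = 0 := by
  simp only [mul_comm _ (g _), mul_sub]
  rw [integral_sub (hg.integrable_fun_mul hX) (hg.integrable_fun_mul (hX.condExp one_le_two)),
    integral_mul_condExp_of_stronglyMeasurable hm hX hg hgm, sub_self]

lemma condCovM_eq_add_of_le [IsFiniteMeasure μ] {m₁ m₂ : MeasurableSpace Ω} (h12 : m₁ ≤ m₂)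
    (h2 : m₂ ≤ m0) {X Y : Ω → ℝ} (hX : MemLp X 2 μ) (hY : MemLp Y 2 μ) :
    condCovM μ m₁ X Y = condCovM μ m₂ X Y +
      ∫ ω, ((μ[X|m₂]) ω - (μ[X|m₁]) ω) * ((μ[Y|m₂]) ω - (μ[Y|m₁]) ω) ∂μ := by
  have hX₂₁ := (hX.condExp (m := m₂) one_le_two).sub (hX.condExp (m := m₁) one_le_two)
  have hY₂₁ := (hY.condExp (m := m₂) one_le_two).sub (hY.condExp (m := m₁) one_le_two)
  have hmeas : ∀ V : Ω → ℝ, StronglyMeasurable[m₂] (μ[V|m₂] - μ[V|m₁]) := fun _ =>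
    stronglyMeasurable_condExp.sub (stronglyMeasurable_condExp.mono h12)
  have key := integral_add_mul_add_of_orthogonal
    (hX.sub (hX.condExp (m := m₂) one_le_two)) hX₂₁
    (hY.sub (hY.condExp (m := m₂) one_le_two)) hY₂₁
    (integral_sub_condExp_mul_eq_zero h2 hX hY₂₁ (hmeas Y))
    (integral_sub_condExp_mul_eq_zero h2 hY hX₂₁ (hmeas X))
  simpa only [condCovM, Pi.sub_apply, sub_add_sub_cancel] using key

lemma condVarM_nonneg (m : MeasurableSpace Ω) (X : Ω → ℝ) : 0 ≤ condVarM μ m X :=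
  integral_nonneg fun _ => mul_self_nonneg _

lemma covGap_le_of_le [IsFiniteMeasure μ] {m₁ m₂ : MeasurableSpace Ω} (h12 : m₁ ≤ m₂)
    (h2 : m₂ ≤ m0) {X Y : Ω → ℝ} (hX : MemLp X 2 μ) (hY : MemLp Y 2 μ) :
    covGap μ m₂ X Y ≤ covGap μ m₁ X Y := by
  have hX₂₁ := (hX.condExp (m := m₂) one_le_two).sub (hX.condExp (m := m₁) one_le_two)
  have hY₂₁ := (hY.condExp (m := m₂) one_le_two).sub (hY.condExp (m := m₁) one_le_two)
  simp only [covGap, condVarM]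
  rw [condCovM_eq_add_of_le h12 h2 hX hX, condCovM_eq_add_of_le h12 h2 hY hY,
    condCovM_eq_add_of_le h12 h2 hX hY]
  exact sqrt_mul_sub_le_sqrt_add_mul_add_sub (condVarM_nonneg m₂ X) (condVarM_nonneg m₂ Y)
    (integral_nonneg fun _ => mul_self_nonneg _) (integral_nonneg fun _ => mul_self_nonneg _)
    (integral_mul_le_sqrt_mul hX₂₁ hY₂₁)

lemma condCovM_bot [IsProbabilityMeasure μ] (X Y : Ω → ℝ) :
    condCovM μ ⊥ X Y = ∫ ω, (X ω - ∫ x, X x ∂μ) * (Y ω - ∫ x, Y x ∂μ) ∂μ := by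
  simp only [condCovM, condExp_bot]

lemma condVarM_bot [IsProbabilityMeasure μ] {X : Ω → ℝ} (hX : AEMeasurable X μ) :
    condVarM μ ⊥ X = variance X μ := by
  simp only [variance_eq_integral hX, condVarM, condCovM_bot, sq]

end

/-- Conditioning reduces the covariance gap.
`√(E[var(X|Z,U)]·E[var(Y|Z,U)]) − E[cov(X,Y|Z,U)]
  ≤ √(E[var(X|Z)]·E[var(Y|Z)]) − E[cov(X,Y|Z)]`, and in particular, with `Z` constant,
`√(E[var(X|U)]·E[var(Y|U)]) − E[cov(X,Y|U)] ≤ √(var(X)·var(Y)) − cov(X,Y)`. -/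
theorem conditioning_reduces_covariance_gap [MeasurableSpace Ω] {γ δ : Type*}
    [MeasurableSpace γ] [MeasurableSpace δ]
    (μ : Measure Ω) [IsProbabilityMeasure μ]
    (X Y : Ω → ℝ) (hX : MemLp X 2 μ) (hY : MemLp Y 2 μ)
    (Z : Ω → γ) (U : Ω → δ) (hZ : Measurable Z) (hU : Measurable U) :
    (Real.sqrt
        (condVarM μ (MeasurableSpace.comap (fun ω => (Z ω, U ω)) inferInstance) X *
          condVarM μ (MeasurableSpace.comap (fun ω => (Z ω, U ω)) inferInstance) Y) -
        condCovM μ (MeasurableSpace.comap (fun ω => (Z ω, U ω)) inferInstance) X Y ≤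
      Real.sqrt
        (condVarM μ (MeasurableSpace.comap Z inferInstance) X *
          condVarM μ (MeasurableSpace.comap Z inferInstance) Y) -
        condCovM μ (MeasurableSpace.comap Z inferInstance) X Y) ∧
    (Real.sqrt
        (condVarM μ (MeasurableSpace.comap U inferInstance) X *
          condVarM μ (MeasurableSpace.comap U inferInstance) Y) -
        condCovM μ (MeasurableSpace.comap U inferInstance) X Y ≤
      Real.sqrt (variance X μ * variance Y μ) -
        ∫ ω, (X ω - ∫ x, X x ∂μ) * (Y ω - ∫ x, Y x ∂μ) ∂μ) := by
  have hZ_le_ZU : MeasurableSpace.comap Z inferInstance ≤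
      MeasurableSpace.comap (fun ω => (Z ω, U ω)) inferInstance :=
    Measurable.comap_le (f := Z) (measurable_fst.comp (comap_measurable _))
  refine ⟨covGap_le_of_le hZ_le_ZU (hZ.prodMk hU).comap_le hX hY, ?_⟩
  have hU_gap := covGap_le_of_le bot_le hU.comap_le hX hY
  rwa [covGap, covGap, condVarM_bot hX.aemeasurable, condVarM_bot hY.aemeasurable,
    condCovM_bot] at hU_gap

end GCIM
end
end

section
/- Let U be a random variable on a finite alphabet and let (X₁,Y₁), …, (Xₙ,Yₙ) be pairs of random variables on finite alphabets such that, conditionally on U, the pairs are mutually independent (i.e., P_{X^nY^n|U=u} = ∏_{i=1}^n P_{X_iY_i|U=u} for every u with positive probability). Then ρ_m(X^n; Y^n | U) = max over 1 ≤ i ≤ n of ρ_m(X_i; Y_i | U), where X^n = (X₁,…,Xₙ) and Y^n = (Y₁,…,Yₙ). -/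
open scoped BigOperators Classical

noncomputable section

namespace GCI

/-- A bundled finite alphabet. -/
structure FinAlph : Type 1 where
  carrier : Type
  [fin : Fintype carrier]

instance : CoeSort FinAlph Type := ⟨FinAlph.carrier⟩
instance (A : FinAlph) : Fintype A := A.fin

variable {Ω : Type} [Fintype Ω]

/-- `p` is a probability mass function on the finite sample space `Ω`. -/
def IsPMF (p : Ω → ℝ) : Prop := (∀ ω, 0 ≤ p ω) ∧ ∑ ω, p ω = 1

/-- Expectation of a real random variable `f` under the pmf `p`. -/
def expec (p : Ω → ℝ) (f : Ω → ℝ) : ℝ := ∑ ω, p ω * f ω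

/-- Marginal pmf of the random variable `X` under `p`. -/
def marg {𝒳 : Type} (p : Ω → ℝ) (X : Ω → 𝒳) (x : 𝒳) : ℝ :=
  ∑ ω, if X ω = x then p ω else 0

/-- Conditional expectation `E[f | U = u]`. -/
def cexp {𝒰 : Type} (p : Ω → ℝ) (U : Ω → 𝒰) (u : 𝒰) (f : Ω → ℝ) : ℝ :=
  (∑ ω, if U ω = u then p ω * f ω else 0) / marg p U u

/-- `E[cov(f, g | U)]`. -/
def ccov {𝒰 : Type} (p : Ω → ℝ) (U : Ω → 𝒰) (f g : Ω → ℝ) : ℝ :=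
  expec p fun ω => (f ω - cexp p U (U ω) f) * (g ω - cexp p U (U ω) g)

/-- `E[var(f | U)]`. -/
def cvar {𝒰 : Type} (p : Ω → ℝ) (U : Ω → 𝒰) (f : Ω → ℝ) : ℝ := ccov p U f f

/-- Conditional Pearson correlation `ρ(f; g | U)`. -/
def ccorr {𝒰 : Type} (p : Ω → ℝ) (U : Ω → 𝒰) (f g : Ω → ℝ) : ℝ :=
  if 0 < cvar p U f * cvar p U g then
    ccov p U f g / (Real.sqrt (cvar p U f) * Real.sqrt (cvar p U g))
  else 0

/-- Conditional correlation ratio `θ(X; Y | U)` for a real-valued `X`. -/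
def cratio {𝒴 𝒰 : Type} (p : Ω → ℝ) (U : Ω → 𝒰) (X : Ω → ℝ) (Y : Ω → 𝒴) : ℝ :=
  ⨆ g : 𝒴 × 𝒰 → ℝ, ccorr p U X fun ω => g (Y ω, U ω)

/-- Conditional maximal correlation `ρ_m(X; Y | U)`. -/
def maxCorr {𝒳 𝒴 𝒰 : Type} (p : Ω → ℝ) (U : Ω → 𝒰) (X : Ω → 𝒳) (Y : Ω → 𝒴) : ℝ :=
  ⨆ f : 𝒳 × 𝒰 → ℝ, ⨆ g : 𝒴 × 𝒰 → ℝ,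
    ccorr p U (fun ω => f (X ω, U ω)) fun ω => g (Y ω, U ω)

/-- Unconditional Pearson correlation. -/
def corr0 (p : Ω → ℝ) (f g : Ω → ℝ) : ℝ := ccorr p (fun _ => ()) f g

/-- Unconditional correlation ratio `θ(X;Y)`. -/
def ratio0 {𝒴 : Type} (p : Ω → ℝ) (X : Ω → ℝ) (Y : Ω → 𝒴) : ℝ :=
  cratio p (fun _ => ()) X Y

/-- Unconditional maximal correlation `ρ_m(X;Y)`. -/
def maxCorr0 {𝒳 𝒴 : Type} (p : Ω → ℝ) (X : Ω → 𝒳) (Y : Ω → 𝒴) : ℝ :=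
  maxCorr p (fun _ => ()) X Y

/-- Shannon entropy (base 2) of the random variable `X` under `p`. -/
def ent {𝒳 : Type} [Fintype 𝒳] (p : Ω → ℝ) (X : Ω → 𝒳) : ℝ :=
  ∑ x, -(marg p X x * Real.logb 2 (marg p X x))

/-- Conditional Shannon entropy `H(X | U)`. -/
def condEnt {𝒳 𝒰 : Type} [Fintype 𝒳] [Fintype 𝒰] (p : Ω → ℝ) (X : Ω → 𝒳) (U : Ω → 𝒰) : ℝ :=
  ent p (fun ω => (X ω, U ω)) - ent p U

/-- Mutual information `I(X; U)`. -/
def mutInfo {𝒳 𝒰 : Type} [Fintype 𝒳] [Fintype 𝒰] (p : Ω → ℝ) (X : Ω → 𝒳) (U : Ω → 𝒰) : ℝ :=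
  ent p X + ent p U - ent p fun ω => (X ω, U ω)

/-- Almost-sure equality of two discrete random variables. -/
def AEEq {𝒱 : Type} (p : Ω → ℝ) (f g : Ω → 𝒱) : Prop := ∀ ω, 0 < p ω → f ω = g ω

/-- The Gács–Körner common information `C_GK(X;Y)`. -/
def CGK {𝒳 𝒴 : Type} (p : Ω → ℝ) (X : Ω → 𝒳) (Y : Ω → 𝒴) : ℝ :=
  sSup { r | ∃ (𝒱 : FinAlph) (f : 𝒳 → 𝒱) (g : 𝒴 → 𝒱),
    AEEq p (fun ω => f (X ω)) (fun ω => g (Y ω)) ∧ r = ent p fun ω => f (X ω) }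

/-- The conditional Gács–Körner common information `C_GK(X;Y|U)`. -/
def CGKcond {𝒳 𝒴 𝒰 : Type} [Fintype 𝒰] (p : Ω → ℝ) (X : Ω → 𝒳) (Y : Ω → 𝒴)
    (U : Ω → 𝒰) : ℝ :=
  sSup { r | ∃ (𝒱 : FinAlph) (f : 𝒳 × 𝒰 → 𝒱) (g : 𝒴 × 𝒰 → 𝒱),
    AEEq p (fun ω => f (X ω, U ω)) (fun ω => g (Y ω, U ω)) ∧
    r = condEnt p (fun ω => f (X ω, U ω)) U }

/-- The `β`-approximate common information (approximate information-correlation function). -/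
def Cbeta {𝒳 𝒴 : Type} [Fintype 𝒳] [Fintype 𝒴] (p : 𝒳 × 𝒴 → ℝ) (β : ℝ) : ℝ :=
  sInf { r | ∃ (𝒰 : FinAlph) (q : (𝒳 × 𝒴) × 𝒰 → ℝ),
    IsPMF q ∧ (∀ a, marg q Prod.fst a = p a) ∧
    maxCorr q Prod.snd (fun a => a.1.1) (fun a => a.1.2) ≤ β ∧
    r = mutInfo q Prod.fst Prod.snd }

/-- The `n`-th term in the definition of the `β`-exact common information:
the normalized smallest entropy of an auxiliary variable for `n` i.i.d. copies. -/
def KbetaN {𝒳 𝒴 : Type} [Fintype 𝒳] [Fintype 𝒴] (p : 𝒳 × 𝒴 → ℝ) (β : ℝ) (n : ℕ) : ℝ :=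
  sInf { r | ∃ (𝒰 : FinAlph) (q : ((Fin n → 𝒳) × (Fin n → 𝒴)) × 𝒰 → ℝ),
    IsPMF q ∧
    (∀ a : (Fin n → 𝒳) × (Fin n → 𝒴), marg q Prod.fst a = ∏ i, p (a.1 i, a.2 i)) ∧
    maxCorr q Prod.snd (fun a => a.1.1) (fun a => a.1.2) ≤ β ∧
    r = (1 / (n : ℝ)) * ent q Prod.snd }

/-- The `β`-exact common information (exact information-correlation function). -/
def Kbeta {𝒳 𝒴 : Type} [Fintype 𝒳] [Fintype 𝒴] (p : 𝒳 × 𝒴 → ℝ) (β : ℝ) : ℝ :=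
  Filter.limUnder Filter.atTop fun n => KbetaN p β n

/-!
Conditioning reduces `ρ_m(X;Y|U) ≤ R` to the bound `Cov(φ(X), ψ(Y)) ≤ R σ(φ(X)) σ(ψ(Y))` under
every conditional law `P_{·|U=u}`: test functions supported on one fiber localize, and
Cauchy–Schwarz over `u` reassembles the fibers. Within a fiber the pairs are independent, so the
law of `(X^n, Y^n)` is a product law, and Witsenhausen's argument bounds products: the law of total
covariance splits a covariance on `S₁ × S₂` into the mean covariance along `S₂` and the covariance
of the conditional means, which are functions of the first pair alone; both parts are bounded
by `R`, and `√a √b + √c √d ≤ √(a + c) √(b + d)` recombines them. Conversely each `(X_i, Y_i)` is a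
function of `(X^n, Y^n)`.
-/

open Finset

section Covariance

variable {S : Type} [Fintype S]

def cov0 (q f g : S → ℝ) : ℝ := expec q (fun s => f s * g s) - expec q f * expec q g

def var0 (q f : S → ℝ) : ℝ := cov0 q f f

lemma expec_sub (q f g : S → ℝ) : expec q (fun s => f s - g s) = expec q f - expec q g := by
  simp only [expec, mul_sub, sum_sub_distrib]

lemma expec_const_mul (q f : S → ℝ) (c : ℝ) : expec q (fun s => c * f s) = c * expec q f := by
  simp only [expec, mul_sum]
  exact sum_congr rfl fun s _ => by ring

lemma expec_congr {q f g : S → ℝ} (h : ∀ s, q s ≠ 0 → f s = g s) : expec q f = expec q g :=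
  sum_congr rfl fun s _ => by
    rcases eq_or_ne (q s) 0 with hs | hs
    · simp [hs]
    · rw [h s hs]

lemma expec_nonneg {q f : S → ℝ} (hq : ∀ s, 0 ≤ q s) (hf : ∀ s, 0 ≤ f s) : 0 ≤ expec q f :=
  sum_nonneg fun s _ => mul_nonneg (hq s) (hf s)

lemma expec_mono {q f g : S → ℝ} (hq : ∀ s, 0 ≤ q s) (h : ∀ s, 0 < q s → f s ≤ g s) :
    expec q f ≤ expec q g :=
  sum_le_sum fun s _ => by
    rcases (hq s).eq_or_lt with hs | hs
    · simp [← hs]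
    · exact mul_le_mul_of_nonneg_left (h s hs) hs.le

lemma cov0_congr {q f g f' g' : S → ℝ} (hf : ∀ s, q s ≠ 0 → f s = f' s)
    (hg : ∀ s, q s ≠ 0 → g s = g' s) : cov0 q f g = cov0 q f' g' := by
  rw [cov0, cov0, expec_congr hf, expec_congr hg,
    expec_congr fun s hs => by rw [hf s hs, hg s hs]]

lemma var0_congr {q f f' : S → ℝ} (hf : ∀ s, q s ≠ 0 → f s = f' s) : var0 q f = var0 q f' :=
  cov0_congr hf hf

lemma cov0_eq_expec_mul_sub {q : S → ℝ} (hq : ∑ s, q s = 1) (f g : S → ℝ) :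
    cov0 q f g = expec q (fun s => (f s - expec q f) * (g s - expec q g)) := by
  have hconst : ∀ c : ℝ, expec q (fun _ => c) = c := fun c => by
    rw [expec, ← sum_mul, hq, one_mul]
  simp only [sub_mul, mul_sub, expec_sub, expec_const_mul, hconst, cov0]
  simp only [mul_comm (f _) (expec q g), expec_const_mul]
  ring

lemma var0_nonneg {q : S → ℝ} (hq : IsPMF q) (f : S → ℝ) : 0 ≤ var0 q f := by
  rw [var0, cov0_eq_expec_mul_sub hq.2]
  exact sum_nonneg fun s _ => mul_nonneg (hq.1 s) (mul_self_nonneg _)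

lemma expec_mul_sq_le {q : S → ℝ} (hq : ∀ s, 0 ≤ q s) (f g : S → ℝ) :
    expec q (fun s => f s * g s) ^ 2 ≤
      expec q (fun s => f s * f s) * expec q (fun s => g s * g s) :=
  sum_sq_le_sum_mul_sum_of_sq_le_mul _ (fun s _ => mul_nonneg (hq s) (mul_self_nonneg _))
    (fun s _ => mul_nonneg (hq s) (mul_self_nonneg _)) fun s _ => le_of_eq (by ring)

lemma le_sqrt_mul_sqrt_of_sq_le {x a b : ℝ} (h : x ^ 2 ≤ a * b) (ha : 0 ≤ a) :
    x ≤ √a * √b :=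
  (le_abs_self x).trans <| (Real.abs_le_sqrt h).trans_eq (Real.sqrt_mul ha b)

lemma expec_sqrt_mul_sqrt_le {q a b : S → ℝ} (hq : ∀ s, 0 ≤ q s) (ha : ∀ s, 0 ≤ a s)
    (hb : ∀ s, 0 ≤ b s) : expec q (fun s => √(a s) * √(b s)) ≤ √(expec q a) * √(expec q b) := by
  refine le_sqrt_mul_sqrt_of_sq_le ?_ (sum_nonneg fun s _ => mul_nonneg (hq s) (ha s))
  refine sum_sq_le_sum_mul_sum_of_sq_le_mul _ (fun s _ => mul_nonneg (hq s) (ha s))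
    (fun s _ => mul_nonneg (hq s) (hb s)) fun s _ => le_of_eq ?_
  rw [mul_pow, mul_pow, Real.sq_sqrt (ha s), Real.sq_sqrt (hb s)]
  ring

lemma sqrt_mul_sqrt_add_sqrt_mul_sqrt_le {a b c d : ℝ} (ha : 0 ≤ a) (hb : 0 ≤ b) (hc : 0 ≤ c)
    (hd : 0 ≤ d) : √a * √b + √c * √d ≤ √(a + c) * √(b + d) := by
  refine le_sqrt_mul_sqrt_of_sq_le ?_ (add_nonneg ha hc)
  nlinarith [sq_nonneg (√a * √d - √c * √b), Real.sq_sqrt ha, Real.sq_sqrt hb,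
    Real.sq_sqrt hc, Real.sq_sqrt hd]

end Covariance

section CovBound

variable {S S' : Type} [Fintype S] [Fintype S']

lemma marg_nonneg {q : S → ℝ} (hq : ∀ s, 0 ≤ q s) {W : Type} (Z : S → W) (w : W) :
    0 ≤ marg q Z w :=
  sum_nonneg fun s _ => by split_ifs <;> simp [hq s]

lemma expec_comp_eq_sum_marg (q : S → ℝ) {W : Type} {Z : S → W} {T : Finset W}
    (hT : ∀ s, Z s ∈ T) (h : W → ℝ) :
    expec q (fun s => h (Z s)) = ∑ w ∈ T, marg q Z w * h w := by
  simp only [marg, sum_mul, ite_mul, zero_mul, expec]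
  rw [sum_comm]
  exact sum_congr rfl fun s _ => by rw [sum_ite_eq, if_pos (hT s)]

lemma expec_comp_eq_of_marg_eq {q : S → ℝ} {q' : S' → ℝ} {W : Type} {Z : S → W} {Z' : S' → W}
    (hZ : ∀ w, marg q Z w = marg q' Z' w) (h : W → ℝ) :
    expec q (fun s => h (Z s)) = expec q' (fun s => h (Z' s)) := by
  rw [expec_comp_eq_sum_marg q (T := univ.image Z ∪ univ.image Z') (fun s => by simp) h,
    expec_comp_eq_sum_marg q' (T := univ.image Z ∪ univ.image Z') (fun s => by simp) h]
  simp only [hZ]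

lemma cov0_comp_eq_of_marg_eq {q : S → ℝ} {q' : S' → ℝ} {W : Type} {Z : S → W} {Z' : S' → W}
    (hZ : ∀ w, marg q Z w = marg q' Z' w) (F G : W → ℝ) :
    cov0 q (fun s => F (Z s)) (fun s => G (Z s)) =
      cov0 q' (fun s => F (Z' s)) (fun s => G (Z' s)) := by
  rw [cov0, cov0, expec_comp_eq_of_marg_eq hZ F, expec_comp_eq_of_marg_eq hZ G,
    expec_comp_eq_of_marg_eq hZ fun w => F w * G w]

variable {A B A' B' : Type}

/-- `ρ_m(X;Y) ≤ R` under the weight `q`, phrased through covariances so that no finiteness of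
the alphabets is needed. -/
def CovBound (q : S → ℝ) (X : S → A) (Y : S → B) (R : ℝ) : Prop :=
  ∀ (φ : A → ℝ) (ψ : B → ℝ), cov0 q (fun s => φ (X s)) (fun s => ψ (Y s)) ≤
    R * (√(var0 q fun s => φ (X s)) * √(var0 q fun s => ψ (Y s)))

lemma CovBound.comp {q : S → ℝ} {X : S → A} {Y : S → B} {R : ℝ} (h : CovBound q X Y R)
    (a : A → A') (b : B → B') : CovBound q (fun s => a (X s)) (fun s => b (Y s)) R :=
  fun φ ψ => h (fun x => φ (a x)) (fun y => ψ (b y))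

lemma CovBound.of_marg_eq {q : S → ℝ} {q' : S' → ℝ} {X : S → A} {Y : S → B} {X' : S' → A}
    {Y' : S' → B} {R : ℝ} (h : CovBound q X Y R)
    (hm : ∀ z, marg q (fun s => (X s, Y s)) z = marg q' (fun s => (X' s, Y' s)) z) :
    CovBound q' X' Y' R := by
  intro φ ψ
  have hφψ := cov0_comp_eq_of_marg_eq hm (fun z => φ z.1) (fun z => ψ z.2)
  have hφ := cov0_comp_eq_of_marg_eq hm (fun z => φ z.1) (fun z => φ z.1)
  have hψ := cov0_comp_eq_of_marg_eq hm (fun z => ψ z.2) (fun z => ψ z.2)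
  simp only at hφψ hφ hψ
  simpa only [var0, hφψ, hφ, hψ] using h φ ψ

end CovBound

section Tensorization

variable {S₁ S₂ : Type} [Fintype S₁] [Fintype S₂]

lemma expec_prod (q₁ : S₁ → ℝ) (q₂ : S₂ → ℝ) (H : S₁ × S₂ → ℝ) :
    expec (fun s => q₁ s.1 * q₂ s.2) H = expec q₁ fun a => expec q₂ fun b => H (a, b) := by
  simp only [expec, Fintype.sum_prod_type, mul_sum]
  exact sum_congr rfl fun a _ => sum_congr rfl fun b _ => by ring

lemma cov0_prod (q₁ : S₁ → ℝ) (q₂ : S₂ → ℝ) (F G : S₁ × S₂ → ℝ) :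
    cov0 (fun s => q₁ s.1 * q₂ s.2) F G =
      expec q₁ (fun a => cov0 q₂ (fun b => F (a, b)) (fun b => G (a, b))) +
        cov0 q₁ (fun a => expec q₂ fun b => F (a, b)) (fun a => expec q₂ fun b => G (a, b)) := by
  simp only [cov0, expec_prod, expec_sub]
  ring

variable {A₁ B₁ A₂ B₂ : Type}

theorem CovBound.prod {q₁ : S₁ → ℝ} {q₂ : S₂ → ℝ} {X₁ : S₁ → A₁} {Y₁ : S₁ → B₁}
    {X₂ : S₂ → A₂} {Y₂ : S₂ → B₂} {R : ℝ} (hq₁ : IsPMF q₁) (hq₂ : IsPMF q₂) (hR : 0 ≤ R)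
    (h₁ : CovBound q₁ X₁ Y₁ R) (h₂ : CovBound q₂ X₂ Y₂ R) :
    CovBound (fun s : S₁ × S₂ => q₁ s.1 * q₂ s.2) (fun s => (X₁ s.1, X₂ s.2))
      (fun s => (Y₁ s.1, Y₂ s.2)) R := by
  intro φ ψ
  set F : S₁ → S₂ → ℝ := fun a b => φ (X₁ a, X₂ b)
  set G : S₁ → S₂ → ℝ := fun a b => ψ (Y₁ a, Y₂ b)
  have within : expec q₁ (fun a => cov0 q₂ (F a) (G a)) ≤
      R * (√(expec q₁ fun a => var0 q₂ (F a)) * √(expec q₁ fun a => var0 q₂ (G a))) :=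
    calc expec q₁ (fun a => cov0 q₂ (F a) (G a))
        ≤ expec q₁ (fun a => R * (√(var0 q₂ (F a)) * √(var0 q₂ (G a)))) :=
          expec_mono hq₁.1 fun a _ => h₂ (fun x => φ (X₁ a, x)) (fun y => ψ (Y₁ a, y))
      _ ≤ R * (√(expec q₁ fun a => var0 q₂ (F a)) * √(expec q₁ fun a => var0 q₂ (G a))) := by
          rw [expec_const_mul]
          exact mul_le_mul_of_nonneg_left (expec_sqrt_mul_sqrt_le hq₁.1
            (fun a => var0_nonneg hq₂ _) (fun a => var0_nonneg hq₂ _)) hR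
  -- the conditional means given the first coordinate are functions of `X₁` and `Y₁`
  have between :=
    h₁ (fun x => expec q₂ fun b => φ (x, X₂ b)) (fun y => expec q₂ fun b => ψ (y, Y₂ b))
  rw [cov0_prod, var0, var0, cov0_prod, cov0_prod]
  calc _ ≤ _ := add_le_add within between
    _ = _ := (mul_add _ _ _).symm
    _ ≤ _ := mul_le_mul_of_nonneg_left (sqrt_mul_sqrt_add_sqrt_mul_sqrt_le
        (expec_nonneg hq₁.1 fun a => var0_nonneg hq₂ _)
        (expec_nonneg hq₁.1 fun a => var0_nonneg hq₂ _) (var0_nonneg hq₁ _) (var0_nonneg hq₁ _)) hR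

lemma isPMF_pi {n : ℕ} {S : Fin n → Type} [∀ i, Fintype (S i)] {q : ∀ i, S i → ℝ}
    (hq : ∀ i, IsPMF (q i)) : IsPMF fun s : ∀ i, S i => ∏ i, q i (s i) :=
  ⟨fun s => prod_nonneg fun i _ => (hq i).1 (s i), by
    rw [← Fintype.prod_sum]
    exact prod_eq_one fun i _ => (hq i).2⟩

lemma CovBound.of_equiv {S S' A B : Type} [Fintype S] [Fintype S'] {q : S → ℝ} {q' : S' → ℝ}
    {X : S → A} {Y : S → B} {X' : S' → A} {Y' : S' → B} {R : ℝ} (h : CovBound q X Y R)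
    (e : S ≃ S') (hq : ∀ s, q' (e s) = q s) (hX : ∀ s, X' (e s) = X s)
    (hY : ∀ s, Y' (e s) = Y s) : CovBound q' X' Y' R :=
  h.of_marg_eq fun z => by
    simp only [marg, ← e.sum_comp, hq, hX, hY]
    congr!

theorem CovBound.pi {n : ℕ} {S A B : Fin n → Type} [∀ i, Fintype (S i)] {q : ∀ i, S i → ℝ}
    {X : ∀ i, S i → A i} {Y : ∀ i, S i → B i} {R : ℝ} (hq : ∀ i, IsPMF (q i)) (hR : 0 ≤ R)
    (h : ∀ i, CovBound (q i) (X i) (Y i) R) :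
    CovBound (fun s : ∀ i, S i => ∏ i, q i (s i)) (fun s i => X i (s i)) (fun s i => Y i (s i))
      R := by
  induction n with
  | zero =>
    intro φ ψ
    simp only [cov0, expec, univ_unique, univ_eq_empty, prod_empty, one_mul, sum_singleton,
      sub_self]
    positivity
  | succ n ih =>
    have htail := ih (fun i => hq i.succ) (fun i => h i.succ)
    refine ((CovBound.prod (hq 0) (isPMF_pi fun i => hq i.succ) hR (h 0) htail).comp
      (Fin.consEquiv A) (Fin.consEquiv B)).of_equiv (Fin.consEquiv S) ?_ ?_ ?_
    · intro s
      simp [Fin.prod_univ_succ]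
    all_goals intro s; funext i; cases i using Fin.cases <;> rfl

end Tensorization

section Conditioning

variable {𝒰 : Type} {p : Ω → ℝ} {U : Ω → 𝒰} {u : 𝒰}

/-- The conditional pmf `P_{·|U=u}`; it vanishes identically when `P_U(u) = 0`. -/
def pcond (p : Ω → ℝ) (U : Ω → 𝒰) (u : 𝒰) (ω : Ω) : ℝ :=
  if U ω = u then p ω / marg p U u else 0

lemma eq_of_pcond_ne_zero {ω : Ω} (h : pcond p U u ω ≠ 0) : U ω = u := by
  by_contra hω
  exact h (if_neg hω)

lemma isPMF_pcond (hp : ∀ ω, 0 ≤ p ω) (hu : marg p U u ≠ 0) : IsPMF (pcond p U u) := by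
  refine ⟨fun ω => ?_, ?_⟩
  · unfold pcond
    split_ifs
    exacts [div_nonneg (hp ω) (marg_nonneg hp U u), le_rfl]
  · have hdiv : ∀ ω, pcond p U u ω = (if U ω = u then p ω else 0) / marg p U u := fun ω => by
      unfold pcond
      split_ifs <;> simp
    simp only [hdiv, ← sum_div]
    exact div_self hu

lemma marg_mul_pcond (hp : ∀ ω, 0 ≤ p ω) (u : 𝒰) (ω : Ω) :
    marg p U u * pcond p U u ω = if U ω = u then p ω else 0 := by
  rcases eq_or_ne (marg p U u) 0 with hu | hu
  · have hfiber := (sum_eq_zero_iff_of_nonneg fun ω _ => (ite_nonneg (hp ω) le_rfl)).1 hu ω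
    simp only [mem_univ, forall_const] at hfiber
    rw [hu, zero_mul, hfiber]
  · unfold pcond
    split_ifs
    exacts [mul_div_cancel₀ _ hu, mul_zero _]

lemma expec_eq_expec_marg_pcond (hp : ∀ ω, 0 ≤ p ω) (U : Ω → 𝒰) [Fintype 𝒰] (f : Ω → ℝ) :
    expec p f = expec (marg p U) fun u => expec (pcond p U u) f := by
  simp only [expec, mul_sum, ← mul_assoc, marg_mul_pcond hp, ite_mul, zero_mul]
  rw [sum_comm]
  exact sum_congr rfl fun ω _ => by rw [sum_ite_eq, if_pos (mem_univ _)]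

lemma cexp_eq_expec_pcond (p : Ω → ℝ) (U : Ω → 𝒰) (u : 𝒰) (f : Ω → ℝ) :
    cexp p U u f = expec (pcond p U u) f := by
  simp only [cexp, expec, pcond, sum_div, ite_mul, zero_mul]
  exact sum_congr rfl fun ω _ => by split_ifs <;> ring

lemma ccov_eq_expec_marg_cov0_pcond [Fintype 𝒰] (hp : ∀ ω, 0 ≤ p ω) (U : Ω → 𝒰)
    (F G : Ω → ℝ) :
    ccov p U F G = expec (marg p U) fun u => cov0 (pcond p U u) F G := by
  rw [ccov, expec_eq_expec_marg_pcond hp U]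
  refine expec_congr fun u hu => ?_
  rw [cov0_eq_expec_mul_sub (isPMF_pcond hp hu).2]
  refine expec_congr fun ω hω => ?_
  rw [eq_of_pcond_ne_zero hω, cexp_eq_expec_pcond, cexp_eq_expec_pcond]

lemma cvar_eq_expec_marg_var0_pcond [Fintype 𝒰] (hp : ∀ ω, 0 ≤ p ω) (U : Ω → 𝒰)
    (F : Ω → ℝ) : cvar p U F = expec (marg p U) fun u => var0 (pcond p U u) F :=
  ccov_eq_expec_marg_cov0_pcond hp U F F

lemma var0_pcond_nonneg (hp : ∀ ω, 0 ≤ p ω) (U : Ω → 𝒰) (u : 𝒰) (f : Ω → ℝ) :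
    0 ≤ var0 (pcond p U u) f := by
  rcases eq_or_ne (marg p U u) 0 with hu | hu
  · simp [var0, cov0, expec, pcond, hu]
  · exact var0_nonneg (isPMF_pcond hp hu) f

lemma cvar_nonneg (hp : ∀ ω, 0 ≤ p ω) (U : Ω → 𝒰) (f : Ω → ℝ) : 0 ≤ cvar p U f :=
  expec_nonneg hp fun _ => mul_self_nonneg _

lemma ccov_le_sqrt_mul_sqrt (hp : ∀ ω, 0 ≤ p ω) (U : Ω → 𝒰) (f g : Ω → ℝ) :
    ccov p U f g ≤ √(cvar p U f) * √(cvar p U g) :=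
  le_sqrt_mul_sqrt_of_sq_le (expec_mul_sq_le hp _ _) (cvar_nonneg hp U f)

lemma ccorr_le_iff (hp : ∀ ω, 0 ≤ p ω) (U : Ω → 𝒰) (f g : Ω → ℝ) {R : ℝ} (hR : 0 ≤ R) :
    ccorr p U f g ≤ R ↔ ccov p U f g ≤ R * (√(cvar p U f) * √(cvar p U g)) := by
  have hfg : √(cvar p U f) * √(cvar p U g) = √(cvar p U f * cvar p U g) :=
    (Real.sqrt_mul (cvar_nonneg hp U f) _).symm
  rw [ccorr, hfg]
  split_ifs with h
  · rw [div_le_iff₀ (Real.sqrt_pos.2 h)]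
  · have hccov := ccov_le_sqrt_mul_sqrt hp U f g
    rw [hfg, Real.sqrt_eq_zero'.2 (not_lt.1 h)] at hccov
    rw [Real.sqrt_eq_zero'.2 (not_lt.1 h), mul_zero]
    exact iff_of_true hR hccov

end Conditioning

section MaxCorr

variable {𝒰 𝒳 𝒴 : Type} {p : Ω → ℝ} {U : Ω → 𝒰} {X : Ω → 𝒳} {Y : Ω → 𝒴}

lemma ccorr_le_one (hp : ∀ ω, 0 ≤ p ω) (U : Ω → 𝒰) (f g : Ω → ℝ) : ccorr p U f g ≤ 1 :=
  (ccorr_le_iff hp U f g zero_le_one).2 <| by simpa using ccov_le_sqrt_mul_sqrt hp U f g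

lemma maxCorr_le_iff (hp : ∀ ω, 0 ≤ p ω) {R : ℝ} :
    maxCorr p U X Y ≤ R ↔
      ∀ (f : 𝒳 × 𝒰 → ℝ) (g : 𝒴 × 𝒰 → ℝ),
        ccorr p U (fun ω => f (X ω, U ω)) (fun ω => g (Y ω, U ω)) ≤ R := by
  have hbdd : ∀ f : 𝒳 × 𝒰 → ℝ, BddAbove (Set.range fun g : 𝒴 × 𝒰 → ℝ =>
      ccorr p U (fun ω => f (X ω, U ω)) fun ω => g (Y ω, U ω)) :=
    fun f => ⟨1, Set.forall_mem_range.2 fun g => ccorr_le_one hp U _ _⟩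
  have hbdd' : BddAbove (Set.range fun f : 𝒳 × 𝒰 → ℝ => ⨆ g : 𝒴 × 𝒰 → ℝ,
      ccorr p U (fun ω => f (X ω, U ω)) fun ω => g (Y ω, U ω)) :=
    ⟨1, Set.forall_mem_range.2 fun f => ciSup_le fun g => ccorr_le_one hp U _ _⟩
  exact ⟨fun h f g => ((le_ciSup (hbdd f) g).trans (le_ciSup hbdd' f)).trans h,
    fun h => ciSup_le fun f => ciSup_le fun g => h f g⟩

lemma maxCorr_nonneg (hp : ∀ ω, 0 ≤ p ω) : 0 ≤ maxCorr p U X Y := by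
  have h := (maxCorr_le_iff (U := U) (X := X) (Y := Y) hp).1 le_rfl (fun _ => 0) (fun _ => 0)
  simpa [ccorr, cvar, ccov, expec, cexp] using h

lemma maxCorr_comp_le (hp : ∀ ω, 0 ≤ p ω) {𝒳' 𝒴' : Type} (a : 𝒳 → 𝒳') (b : 𝒴 → 𝒴') :
    maxCorr p U (fun ω => a (X ω)) (fun ω => b (Y ω)) ≤ maxCorr p U X Y :=
  (maxCorr_le_iff hp).2 fun f g =>
    (maxCorr_le_iff hp).1 le_rfl (fun z => f (a z.1, z.2)) (fun z => g (b z.1, z.2))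

variable [Fintype 𝒰]

lemma ccov_indicator (hp : ∀ ω, 0 ≤ p ω) (U : Ω → 𝒰) (u : 𝒰) (F G : Ω → ℝ) :
    ccov p U (fun ω => if U ω = u then F ω else 0) (fun ω => if U ω = u then G ω else 0) =
      marg p U u * cov0 (pcond p U u) F G := by
  rw [ccov_eq_expec_marg_cov0_pcond hp, expec, sum_eq_single u]
  · congr 1
    exact cov0_congr (fun ω hω => by simp [eq_of_pcond_ne_zero hω])
      (fun ω hω => by simp [eq_of_pcond_ne_zero hω])
  · intro v _ hv
    rw [cov0_congr (f' := fun _ => 0) (g' := fun _ => 0)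
      (fun ω hω => by simp [eq_of_pcond_ne_zero hω, hv])
      (fun ω hω => by simp [eq_of_pcond_ne_zero hω, hv])]
    simp [cov0, expec]
  · simp

lemma cvar_indicator (hp : ∀ ω, 0 ≤ p ω) (U : Ω → 𝒰) (u : 𝒰) (F : Ω → ℝ) :
    cvar p U (fun ω => if U ω = u then F ω else 0) = marg p U u * var0 (pcond p U u) F :=
  ccov_indicator hp U u F F

/-- Test functions supported on `{U = u}` localize the conditional covariance to that fiber. -/
lemma covBound_pcond_of_maxCorr_le (hp : ∀ ω, 0 ≤ p ω) {R : ℝ} (hR : 0 ≤ R)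
    (h : maxCorr p U X Y ≤ R) (hu : 0 < marg p U u) : CovBound (pcond p U u) X Y R := by
  intro φ ψ
  have hloc := (ccorr_le_iff hp U _ _ hR).1 ((maxCorr_le_iff hp).1 h
    (fun z => if z.2 = u then φ z.1 else 0) (fun z => if z.2 = u then ψ z.1 else 0))
  simp only [cvar_indicator hp U u, ccov_indicator hp U u, Real.sqrt_mul hu.le] at hloc
  refine le_of_mul_le_mul_left (hloc.trans_eq ?_) hu
  linear_combination (R * √(var0 (pcond p U u) fun ω => φ (X ω)) *
    √(var0 (pcond p U u) fun ω => ψ (Y ω))) * Real.mul_self_sqrt hu.le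

lemma maxCorr_le_of_covBound_pcond (hp : ∀ ω, 0 ≤ p ω) {R : ℝ} (hR : 0 ≤ R)
    (h : ∀ u, 0 < marg p U u → CovBound (pcond p U u) X Y R) : maxCorr p U X Y ≤ R := by
  refine (maxCorr_le_iff hp).2 fun f g => (ccorr_le_iff hp U _ _ hR).2 ?_
  rw [ccov_eq_expec_marg_cov0_pcond hp, cvar_eq_expec_marg_var0_pcond hp,
    cvar_eq_expec_marg_var0_pcond hp]
  calc expec (marg p U) (fun u => cov0 (pcond p U u) _ _)
      ≤ expec (marg p U) fun u => R * (√(var0 (pcond p U u) fun ω => f (X ω, U ω)) *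
          √(var0 (pcond p U u) fun ω => g (Y ω, U ω))) := by
        refine expec_mono (marg_nonneg hp U) fun u hu => ?_
        have hf : ∀ ω, pcond p U u ω ≠ 0 → f (X ω, U ω) = f (X ω, u) := fun ω hω => by
          rw [eq_of_pcond_ne_zero hω]
        have hg : ∀ ω, pcond p U u ω ≠ 0 → g (Y ω, U ω) = g (Y ω, u) := fun ω hω => by
          rw [eq_of_pcond_ne_zero hω]
        rw [cov0_congr hf hg, var0_congr hf, var0_congr hg]
        exact h u hu (fun x => f (x, u)) (fun y => g (y, u))
    _ ≤ R * (√(expec (marg p U) fun u => var0 (pcond p U u) fun ω => f (X ω, U ω)) *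
          √(expec (marg p U) fun u => var0 (pcond p U u) fun ω => g (Y ω, U ω))) := by
        rw [expec_const_mul]
        exact mul_le_mul_of_nonneg_left (expec_sqrt_mul_sqrt_le (marg_nonneg hp U)
          (fun u => var0_pcond_nonneg hp U u _) (fun u => var0_pcond_nonneg hp U u _)) hR

theorem maxCorr_le_iff_covBound_pcond (hp : ∀ ω, 0 ≤ p ω) {R : ℝ} (hR : 0 ≤ R) :
    maxCorr p U X Y ≤ R ↔ ∀ u, 0 < marg p U u → CovBound (pcond p U u) X Y R :=
  ⟨fun h _ hu => covBound_pcond_of_maxCorr_le hp hR h hu, maxCorr_le_of_covBound_pcond hp hR⟩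

end MaxCorr

section Independence

lemma marg_pi {n : ℕ} {S A B : Fin n → Type} [∀ i, Fintype (S i)] (q : ∀ i, S i → ℝ)
    (X : ∀ i, S i → A i) (Y : ∀ i, S i → B i) (xs : ∀ i, A i) (ys : ∀ i, B i) :
    marg (fun s : ∀ i, S i => ∏ i, q i (s i)) (fun s => (fun i => X i (s i), fun i => Y i (s i)))
        (xs, ys) = ∏ i, marg (q i) (fun s => (X i s, Y i s)) (xs i, ys i) := by
  simp only [marg, Fintype.prod_sum]
  exact sum_congr rfl fun s _ => by simp [Prod.ext_iff, funext_iff, forall_and, prod_ite_zero]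

variable {𝒰 : Type} {p : Ω → ℝ} {U : Ω → 𝒰} {u : 𝒰}

lemma marg_pcond {T : Type} (W : Ω → T) (t : T) :
    marg (pcond p U u) W t = marg p (fun ω => (W ω, U ω)) (t, u) / marg p U u := by
  simp only [marg, pcond, sum_div]
  exact sum_congr rfl fun ω _ => by split_ifs <;> simp_all

lemma marg_pcond_eq_marg_pi {n : ℕ} (hn : 0 < n) {𝒳 𝒴 : Fin n → Type} {X : ∀ i, Ω → 𝒳 i}
    {Y : ∀ i, Ω → 𝒴 i} (hu : 0 < marg p U u)
    (hindep : ∀ (xs : ∀ i, 𝒳 i) (ys : ∀ i, 𝒴 i),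
      marg p (fun ω => ((fun i => X i ω), (fun i => Y i ω), U ω)) (xs, ys, u) *
          (marg p U u) ^ (n - 1) =
        ∏ i, marg p (fun ω => (X i ω, Y i ω, U ω)) (xs i, ys i, u))
    (z : (∀ i, 𝒳 i) × (∀ i, 𝒴 i)) :
    marg (pcond p U u) (fun ω => (fun i => X i ω, fun i => Y i ω)) z =
      marg (fun s : Fin n → Ω => ∏ i, pcond p U u (s i))
        (fun s => (fun i => X i (s i), fun i => Y i (s i))) z := by
  obtain ⟨xs, ys⟩ := z
  have hassoc : ∀ {A B : Type} (V : Ω → A) (W : Ω → B) (a : A) (b : B),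
      marg p (fun ω => ((V ω, W ω), U ω)) ((a, b), u) =
        marg p (fun ω => (V ω, W ω, U ω)) (a, b, u) :=
    fun V W a b => by simp only [marg, Prod.mk.injEq, and_assoc]
  rw [marg_pi, marg_pcond]
  simp only [marg_pcond, hassoc, prod_div_distrib, ← hindep, prod_const, card_univ,
    Fintype.card_fin]
  rw [← pow_sub_one_mul hn.ne']
  field_simp

end Independence

/-- Tensorization. If, conditionally on `U`, the pairs
`(X₁,Y₁), …, (Xₙ,Yₙ)` are mutually independent, then
`ρ_m(X^n; Y^n | U) = max_{1 ≤ i ≤ n} ρ_m(X_i; Y_i | U)`. The conditional independence is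
expressed (multiplying through by `P_U(u)^{n-1}`) as
`P(X^n = xs, Y^n = ys, U = u)·P_U(u)^{n-1} = ∏ i, P(X_i = xs i, Y_i = ys i, U = u)`. -/
theorem maxCorr_tensorization {Ω 𝒰 : Type} [Fintype Ω] [Fintype 𝒰] {n : ℕ} (hn : 0 < n)
    {𝒳 𝒴 : Fin n → Type}
    (p : Ω → ℝ) (hp : IsPMF p) (X : ∀ i, Ω → 𝒳 i) (Y : ∀ i, Ω → 𝒴 i) (U : Ω → 𝒰)
    (hindep : ∀ u : 𝒰, 0 < marg p U u →
      ∀ (xs : ∀ i, 𝒳 i) (ys : ∀ i, 𝒴 i),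
        marg p (fun ω => ((fun i => X i ω), (fun i => Y i ω), U ω)) (xs, ys, u) *
            (marg p U u) ^ (n - 1) =
          ∏ i, marg p (fun ω => (X i ω, Y i ω, U ω)) (xs i, ys i, u)) :
    maxCorr p U (fun ω i => X i ω) (fun ω i => Y i ω) =
      ⨆ i : Fin n, maxCorr p U (X i) (Y i) := by
  have hR : 0 ≤ ⨆ i, maxCorr p U (X i) (Y i) :=
    Real.iSup_nonneg fun i => maxCorr_nonneg hp.1
  have hcoord : ∀ i, maxCorr p U (X i) (Y i) ≤ maxCorr p U (fun ω i => X i ω) (fun ω i => Y i ω) :=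
    fun i => maxCorr_comp_le (X := fun ω i => X i ω) (Y := fun ω i => Y i ω) hp.1
      (fun xs => xs i) (fun ys => ys i)
  refine le_antisymm ((maxCorr_le_iff_covBound_pcond hp.1 hR).2 fun u hu => ?_)
    (Real.iSup_le hcoord (maxCorr_nonneg hp.1))
  have hfactor : ∀ i, CovBound (pcond p U u) (X i) (Y i) (⨆ i, maxCorr p U (X i) (Y i)) :=
    fun i => (maxCorr_le_iff_covBound_pcond hp.1 hR).1
      (le_ciSup (f := fun i => maxCorr p U (X i) (Y i)) (Set.finite_range _).bddAbove i) u hu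
  exact (CovBound.pi (fun _ => isPMF_pcond hp.1 hu.ne') hR hfactor).of_marg_eq fun z =>
    (marg_pcond_eq_marg_pi hn hu (hindep u hu) z).symm

end GCI
end
end
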